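/- arXiv:1212.3920 — 6 statements merged into one kernel-verified Lean document; each statement's English description precedes it below -/
import Mathlib

section
/- The order parameter κ ↦ c(κ) is a continuous, strictly increasing bijection from [0,∞) onto [0,1); in particular c(0) = 0, 0 ≤ c(κ) < 1 for all κ ≥ 0, and c(κ) → 1 as κ → ∞. -/
/-
Write `w θ = sin θ ^ (n - 2)`, `Z κ = ∫ e^{κ cos θ} w θ dθ` and `M κ = ∫ cos θ e^{κ cos θ} w θ dθ`
over `[0, π]`, so that `c = M / Z` is the mean of `cos` under the tilted weight `e^{κ cos θ} w θ`.

For `a < b` and `m = c a`, the difference `M b - m Z b` equals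
`∫ (cos θ - m) (e^{(b-a) cos θ} - e^{(b-a) m}) e^{a cos θ} w θ dθ`, since the correction term is a
multiple of `M a - m Z a = 0`; this integrand is nonnegative and not identically zero, so
`c b > c a`. Moreover `c < 1` because `cos θ < 1` on `(0, π)`, `c 0 = 0` by the symmetry
`θ ↦ π - θ`, and `c κ → 1` because the weight concentrates at `θ = 0`: the mass beyond `δ` is
`O(e^{κ cos δ})`, while the total mass is at least of order `e^{κ cos (δ / 2)}`. The intermediate
value theorem then makes `c` a bijection from `[0, ∞)` onto `[c 0, 1)`.
-/

open MeasureTheory Real Filter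

/-- The order parameter `c(κ)` of the von Mises distribution in dimension `n`. -/
noncomputable def orderParam (n : ℕ) (κ : ℝ) : ℝ :=
  (∫ θ in (0:ℝ)..π, Real.cos θ * Real.exp (κ * Real.cos θ) * Real.sin θ ^ (n - 2)) /
  (∫ θ in (0:ℝ)..π, Real.exp (κ * Real.cos θ) * Real.sin θ ^ (n - 2))

open Set Topology

theorem StrictMonoOn.bijOn_Ici_Ico {f : ℝ → ℝ} {a b : ℝ} (hmono : StrictMonoOn f (Ici a))
    (hf : ContinuousOn f (Ici a)) (hlim : Tendsto f atTop (𝓝 b)) :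
    BijOn f (Ici a) (Ico (f a) b) := by
  refine ⟨fun x hx => ⟨hmono.monotoneOn self_mem_Ici hx hx, ?_⟩, hmono.injOn, fun y hy => ?_⟩
  · have hx1 : x + 1 ∈ Ici a := by simp only [mem_Ici] at hx ⊢; linarith
    refine (hmono hx hx1 (by linarith)).trans_le (ge_of_tendsto hlim ?_)
    filter_upwards [eventually_ge_atTop (x + 1)] with y hy
    exact hmono.monotoneOn hx1 (le_trans hx1 hy) hy
  · obtain ⟨x, hyx, hax⟩ :=
      ((hlim.eventually (lt_mem_nhds hy.2)).and (eventually_ge_atTop a)).exists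
    obtain ⟨z, hz, rfl⟩ := intermediate_value_Icc hax (hf.mono Icc_subset_Ici_self) ⟨hy.1, hyx.le⟩
    exact ⟨z, hz.1, rfl⟩

theorem sub_mul_exp_sub_exp_pos {t x y : ℝ} (ht : 0 < t) (hxy : x ≠ y) :
    0 < (x - y) * (exp (t * x) - exp (t * y)) := by
  rcases hxy.lt_or_gt with h | h
  · exact mul_pos_of_neg_of_neg (by linarith)
      (sub_neg.2 (exp_lt_exp.2 (mul_lt_mul_of_pos_left h ht)))
  · exact mul_pos (by linarith) (sub_pos.2 (exp_lt_exp.2 (mul_lt_mul_of_pos_left h ht)))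

namespace VonMises

noncomputable def partitionFn (w : ℝ → ℝ) (κ : ℝ) : ℝ :=
  ∫ θ in (0:ℝ)..π, exp (κ * cos θ) * w θ

noncomputable def cosMoment (w : ℝ → ℝ) (κ : ℝ) : ℝ :=
  ∫ θ in (0:ℝ)..π, cos θ * exp (κ * cos θ) * w θ

noncomputable def meanCos (w : ℝ → ℝ) (κ : ℝ) : ℝ :=
  cosMoment w κ / partitionFn w κ

variable {w : ℝ → ℝ}

theorem nonneg_of_pos_on_Ioo (hw : Continuous w) (hpos : ∀ θ ∈ Ioo 0 π, 0 < w θ) :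
    ∀ θ ∈ Icc 0 π, 0 ≤ w θ := by
  rw [← closure_Ioo pi_pos.ne]
  exact (isClosed_le continuous_const hw).closure_subset_iff.2 fun θ hθ => (hpos θ hθ).le

theorem continuous_partitionFn (hw : Continuous w) : Continuous (partitionFn w) :=
  intervalIntegral.continuous_parametric_intervalIntegral_of_continuous' (by fun_prop) 0 π

theorem continuous_cosMoment (hw : Continuous w) : Continuous (cosMoment w) :=
  intervalIntegral.continuous_parametric_intervalIntegral_of_continuous' (by fun_prop) 0 π

theorem partitionFn_pos (hw : Continuous w) (hpos : ∀ θ ∈ Ioo 0 π, 0 < w θ) (κ : ℝ) :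
    0 < partitionFn w κ :=
  intervalIntegral.intervalIntegral_pos_of_pos_on
    ((by fun_prop : Continuous _).intervalIntegrable _ _)
    (fun θ hθ => mul_pos (exp_pos _) (hpos θ hθ)) pi_pos

theorem integral_cos_sub_mul (hw : Continuous w) (κ m : ℝ) :
    ∫ θ in (0:ℝ)..π, (cos θ - m) * (exp (κ * cos θ) * w θ) =
      cosMoment w κ - m * partitionFn w κ := by
  rw [cosMoment, partitionFn, ← intervalIntegral.integral_const_mul,
    ← intervalIntegral.integral_sub ((by fun_prop : Continuous _).intervalIntegrable _ _)
      ((by fun_prop : Continuous _).intervalIntegrable _ _)]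
  exact intervalIntegral.integral_congr fun θ _ => by ring

theorem cosMoment_lt_partitionFn (hw : Continuous w) (hpos : ∀ θ ∈ Ioo 0 π, 0 < w θ) (κ : ℝ) :
    cosMoment w κ < partitionFn w κ := by
  have h : 0 < ∫ θ in (0:ℝ)..π, -((cos θ - 1) * (exp (κ * cos θ) * w θ)) := by
    refine intervalIntegral.intervalIntegral_pos_of_pos_on
      ((by fun_prop : Continuous _).intervalIntegrable _ _) (fun θ hθ => ?_) pi_pos
    have hcos : cos θ < 1 := by simpa using cos_lt_cos_of_nonneg_of_le_pi le_rfl hθ.2.le hθ.1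
    nlinarith [mul_pos (exp_pos (κ * cos θ)) (hpos θ hθ)]
  rw [intervalIntegral.integral_neg, integral_cos_sub_mul hw] at h
  linarith

theorem cosMoment_zero_of_symm (hsymm : ∀ θ, w (π - θ) = w θ) : cosMoment w 0 = 0 := by
  have h := intervalIntegral.integral_comp_sub_left (fun θ => cos θ * w θ) π (a := 0) (b := π)
  simp only [cos_pi_sub, hsymm, neg_mul, intervalIntegral.integral_neg, sub_zero, sub_self] at h
  simp only [cosMoment, zero_mul, exp_zero, mul_one]
  linarith

theorem continuous_meanCos (hw : Continuous w) (hpos : ∀ θ ∈ Ioo 0 π, 0 < w θ) :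
    Continuous (meanCos w) :=
  (continuous_cosMoment hw).div (continuous_partitionFn hw) fun κ => (partitionFn_pos hw hpos κ).ne'

theorem meanCos_lt_one (hw : Continuous w) (hpos : ∀ θ ∈ Ioo 0 π, 0 < w θ) (κ : ℝ) :
    meanCos w κ < 1 :=
  (div_lt_one (partitionFn_pos hw hpos κ)).2 (cosMoment_lt_partitionFn hw hpos κ)

theorem meanCos_zero_of_symm (hsymm : ∀ θ, w (π - θ) = w θ) : meanCos w 0 = 0 := by
  rw [meanCos, cosMoment_zero_of_symm hsymm, zero_div]

theorem cosMoment_mul_lt (hw : Continuous w) (hpos : ∀ θ ∈ Ioo 0 π, 0 < w θ) {a b : ℝ}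
    (hab : a < b) : cosMoment w a * partitionFn w b < cosMoment w b * partitionFn w a := by
  have hZa := partitionFn_pos hw hpos a
  set m := cosMoment w a / partitionFn w a
  set t := b - a
  have ht : 0 < t := sub_pos.2 hab
  have hMa : cosMoment w a = m * partitionFn w a := (div_mul_cancel₀ _ hZa.ne').symm
  have hsplit : ∫ θ in (0:ℝ)..π, (cos θ - m) * (exp (t * cos θ) - exp (t * m)) *
        (exp (a * cos θ) * w θ) =
      (cosMoment w b - m * partitionFn w b) -
        exp (t * m) * (cosMoment w a - m * partitionFn w a) := by
    rw [← integral_cos_sub_mul hw, ← integral_cos_sub_mul hw, ← intervalIntegral.integral_const_mul,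
      ← intervalIntegral.integral_sub ((by fun_prop : Continuous _).intervalIntegrable _ _)
        ((by fun_prop : Continuous _).intervalIntegrable _ _)]
    refine intervalIntegral.integral_congr fun θ _ => ?_
    simp only [t, sub_mul b a, exp_sub]
    field_simp
  obtain ⟨c, hc, hcm⟩ : ∃ c ∈ Ioo 0 π, cos c ≠ m := by
    by_cases hm : m = 0
    · exact ⟨π / 3, ⟨by positivity, by linarith [pi_pos]⟩, by rw [cos_pi_div_three, hm]; norm_num⟩
    · exact ⟨π / 2, ⟨by positivity, by linarith [pi_pos]⟩, by rw [cos_pi_div_two]; exact Ne.symm hm⟩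
  have hw₀ := nonneg_of_pos_on_Ioo hw hpos
  have hint : 0 < ∫ θ in (0:ℝ)..π, (cos θ - m) * (exp (t * cos θ) - exp (t * m)) *
      (exp (a * cos θ) * w θ) := by
    refine intervalIntegral.integral_pos pi_pos (by fun_prop) (fun θ hθ => ?_)
      ⟨c, Ioo_subset_Icc_self hc, mul_pos (sub_mul_exp_sub_exp_pos ht hcm)
        (mul_pos (exp_pos _) (hpos c hc))⟩
    refine mul_nonneg ?_ (mul_nonneg (exp_pos _).le (hw₀ θ (Ioc_subset_Icc_self hθ)))
    rcases eq_or_ne (cos θ) m with h | h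
    · simp [h]
    · exact (sub_mul_exp_sub_exp_pos ht h).le
  rw [hsplit, hMa, sub_self, mul_zero, sub_zero] at hint
  rw [hMa]
  nlinarith [mul_pos hZa hint]

theorem meanCos_strictMono (hw : Continuous w) (hpos : ∀ θ ∈ Ioo 0 π, 0 < w θ) :
    StrictMono (meanCos w) := fun a b hab =>
  (div_lt_div_iff₀ (partitionFn_pos hw hpos a) (partitionFn_pos hw hpos b)).2
    (cosMoment_mul_lt hw hpos hab)

theorem partitionFn_ge (hw : Continuous w) (hpos : ∀ θ ∈ Ioo 0 π, 0 < w θ) {κ s : ℝ}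
    (hκ : 0 ≤ κ) (hs : s ∈ Icc 0 π) :
    exp (κ * cos s) * ∫ θ in (0:ℝ)..s, w θ ≤ partitionFn w κ := by
  have hw₀ := nonneg_of_pos_on_Ioo hw hpos
  calc exp (κ * cos s) * ∫ θ in (0:ℝ)..s, w θ
      = ∫ θ in (0:ℝ)..s, exp (κ * cos s) * w θ := (intervalIntegral.integral_const_mul _ _).symm
    _ ≤ ∫ θ in (0:ℝ)..s, exp (κ * cos θ) * w θ := by
      refine intervalIntegral.integral_mono_on hs.1
        ((by fun_prop : Continuous _).intervalIntegrable _ _)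
        ((by fun_prop : Continuous _).intervalIntegrable _ _) fun θ hθ => ?_
      refine mul_le_mul_of_nonneg_right (exp_le_exp.2 (mul_le_mul_of_nonneg_left ?_ hκ))
        (hw₀ θ ⟨hθ.1, hθ.2.trans hs.2⟩)
      exact cos_le_cos_of_nonneg_of_le_pi hθ.1 hs.2 hθ.2
    _ ≤ partitionFn w κ := by
      refine intervalIntegral.integral_mono_interval le_rfl hs.1 hs.2 ?_
        ((by fun_prop : Continuous _).intervalIntegrable _ _)
      refine (ae_restrict_iff' measurableSet_Ioc).2 (Eventually.of_forall fun θ hθ => ?_)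
      exact mul_nonneg (exp_pos _).le (hw₀ θ (Ioc_subset_Icc_self hθ))

theorem cosMoment_ge (hw : Continuous w) (hpos : ∀ θ ∈ Ioo 0 π, 0 < w θ) {κ δ : ℝ}
    (hκ : 0 ≤ κ) (hδ : δ ∈ Icc 0 π) :
    cos δ * partitionFn w κ - 2 * exp (κ * cos δ) * ∫ θ in δ..π, w θ ≤ cosMoment w κ := by
  have hw₀ := nonneg_of_pos_on_Ioo hw hpos
  set f := fun θ => (cos θ - cos δ) * (exp (κ * cos θ) * w θ)
  have hf : Continuous f := by fun_prop
  have hhead : 0 ≤ ∫ θ in (0:ℝ)..δ, f θ := by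
    refine intervalIntegral.integral_nonneg hδ.1 fun θ hθ => mul_nonneg ?_
      (mul_nonneg (exp_pos _).le (hw₀ θ ⟨hθ.1, hθ.2.trans hδ.2⟩))
    exact sub_nonneg.2 (cos_le_cos_of_nonneg_of_le_pi hθ.1 hδ.2 hθ.2)
  have htail : -(2 * exp (κ * cos δ) * ∫ θ in δ..π, w θ) ≤ ∫ θ in δ..π, f θ := by
    rw [← intervalIntegral.integral_const_mul, ← intervalIntegral.integral_neg]
    refine intervalIntegral.integral_mono_on hδ.2
      ((by fun_prop : Continuous _).intervalIntegrable _ _) (hf.intervalIntegrable _ _)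
      fun θ hθ => ?_
    have hwθ := hw₀ θ ⟨hδ.1.trans hθ.1, hθ.2⟩
    have hexp : exp (κ * cos θ) ≤ exp (κ * cos δ) :=
      exp_le_exp.2 (mul_le_mul_of_nonneg_left (cos_le_cos_of_nonneg_of_le_pi hδ.1 hθ.2 hθ.1) hκ)
    have hcos : -2 ≤ cos θ - cos δ := by linarith [neg_one_le_cos θ, cos_le_one δ]
    have hexpw := mul_le_mul_of_nonneg_right hexp hwθ
    have := mul_le_mul_of_nonneg_right hcos (mul_nonneg (exp_pos (κ * cos θ)).le hwθ)
    simp only [f]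
    nlinarith
  have hsum := intervalIntegral.integral_add_adjacent_intervals
    (hf.intervalIntegrable (μ := volume) 0 δ) (hf.intervalIntegrable δ π)
  rw [integral_cos_sub_mul hw] at hsum
  linarith

theorem meanCos_ge (hw : Continuous w) (hpos : ∀ θ ∈ Ioo 0 π, 0 < w θ) {κ s δ : ℝ}
    (hκ : 0 ≤ κ) (hs : s ∈ Ioc 0 π) (hδ : δ ∈ Icc 0 π) :
    cos δ - 2 * (∫ θ in δ..π, w θ) / (∫ θ in (0:ℝ)..s, w θ) * exp (κ * (cos δ - cos s)) ≤
      meanCos w κ := by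
  have hw₀ := nonneg_of_pos_on_Ioo hw hpos
  have hV : 0 < ∫ θ in (0:ℝ)..s, w θ :=
    intervalIntegral.intervalIntegral_pos_of_pos_on (hw.intervalIntegrable (μ := volume) _ _)
      (fun θ hθ => hpos θ ⟨hθ.1, hθ.2.trans_le hs.2⟩) hs.1
  have hW : 0 ≤ ∫ θ in δ..π, w θ :=
    intervalIntegral.integral_nonneg hδ.2 fun θ hθ => hw₀ θ ⟨hδ.1.trans hθ.1, hθ.2⟩
  have hZ := partitionFn_pos hw hpos κ
  have hZs := partitionFn_ge hw hpos hκ (Ioc_subset_Icc_self hs)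
  have hM := cosMoment_ge hw hpos hκ hδ
  rw [meanCos, le_div_iff₀ hZ]
  have hexp : exp (κ * cos δ) = exp (κ * (cos δ - cos s)) * exp (κ * cos s) := by
    rw [← exp_add]; ring_nf
  have : 2 * exp (κ * cos δ) * (∫ θ in δ..π, w θ) ≤
      2 * (∫ θ in δ..π, w θ) / (∫ θ in (0:ℝ)..s, w θ) * exp (κ * (cos δ - cos s)) *
        partitionFn w κ := by
    calc 2 * exp (κ * cos δ) * (∫ θ in δ..π, w θ)
        = 2 * (∫ θ in δ..π, w θ) / (∫ θ in (0:ℝ)..s, w θ) * exp (κ * (cos δ - cos s)) *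
            (exp (κ * cos s) * ∫ θ in (0:ℝ)..s, w θ) := by
          rw [hexp]; field_simp
      _ ≤ _ := mul_le_mul_of_nonneg_left hZs (by positivity)
  linarith

theorem tendsto_meanCos_atTop (hw : Continuous w) (hpos : ∀ θ ∈ Ioo 0 π, 0 < w θ) :
    Tendsto (meanCos w) atTop (𝓝 1) := by
  refine tendsto_order.2 ⟨fun a ha => ?_, fun a ha => Eventually.of_forall fun κ =>
    (meanCos_lt_one hw hpos κ).trans ha⟩
  obtain ⟨δ, hδa, hδ⟩ : ∃ δ, a < cos δ ∧ δ ∈ Ioo 0 π :=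
    (((continuous_cos.tendsto' 0 1 cos_zero).eventually (lt_mem_nhds ha)).filter_mono
      nhdsWithin_le_nhds |>.and (Ioo_mem_nhdsGT pi_pos)).exists
  have hr : cos δ - cos (δ / 2) < 0 := by
    linarith [cos_lt_cos_of_nonneg_of_le_pi (by linarith [hδ.1] : 0 ≤ δ / 2) hδ.2.le
      (by linarith [hδ.1])]
  have hdecay : Tendsto (fun κ => exp (κ * (cos δ - cos (δ / 2)))) atTop (𝓝 0) :=
    tendsto_exp_atBot.comp (tendsto_id.atTop_mul_const_of_neg hr)
  have hlower := (tendsto_const_nhds (x := cos δ)).sub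
    (hdecay.const_mul (2 * (∫ θ in δ..π, w θ) / (∫ θ in (0:ℝ)..(δ / 2), w θ)))
  rw [mul_zero, sub_zero] at hlower
  filter_upwards [hlower.eventually (lt_mem_nhds hδa), eventually_ge_atTop 0] with κ hκa hκ
  exact hκa.trans_le (meanCos_ge hw hpos hκ ⟨by linarith [hδ.1], by linarith [hδ.1, hδ.2]⟩
    (Ioo_subset_Icc_self hδ))

end VonMises

theorem orderParam_bijOn_general (n : ℕ) :
    ContinuousOn (orderParam n) (Set.Ici 0) ∧
    StrictMonoOn (orderParam n) (Set.Ici 0) ∧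
    Set.BijOn (orderParam n) (Set.Ici 0) (Set.Ico 0 1) ∧
    orderParam n 0 = 0 ∧
    (∀ κ : ℝ, 0 ≤ κ → 0 ≤ orderParam n κ ∧ orderParam n κ < 1) ∧
    Tendsto (orderParam n) atTop (nhds 1) := by
  have hw : Continuous fun θ => sin θ ^ (n - 2) := by fun_prop
  have hpos : ∀ θ ∈ Ioo 0 π, 0 < sin θ ^ (n - 2) := fun θ hθ =>
    pow_pos (sin_pos_of_pos_of_lt_pi hθ.1 hθ.2) _
  have hc : orderParam n = VonMises.meanCos fun θ => sin θ ^ (n - 2) := rfl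
  have hzero : orderParam n 0 = 0 := by
    rw [hc, VonMises.meanCos_zero_of_symm fun θ => by rw [sin_pi_sub]]
  have hcont := (VonMises.continuous_meanCos hw hpos).continuousOn (s := Ici 0)
  have hmono := (VonMises.meanCos_strictMono hw hpos).strictMonoOn (Ici 0)
  have hlim := VonMises.tendsto_meanCos_atTop hw hpos
  rw [← hc] at hcont hmono hlim
  have hbij := hmono.bijOn_Ici_Ico hcont hlim
  rw [hzero] at hbij
  exact ⟨hcont, hmono, hbij, hzero, fun κ hκ => hbij.mapsTo hκ, hlim⟩

/-- The order parameter is a continuous, strictly increasing bijection from `[0,∞)` onto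
`[0,1)`; in particular `c 0 = 0`, `0 ≤ c κ < 1` for `κ ≥ 0` and `c κ → 1` at `+∞`. -/
theorem orderParam_bijOn (n : ℕ) (hn : 2 ≤ n) :
    ContinuousOn (orderParam n) (Set.Ici 0) ∧
    StrictMonoOn (orderParam n) (Set.Ici 0) ∧
    Set.BijOn (orderParam n) (Set.Ici 0) (Set.Ico 0 1) ∧
    orderParam n 0 = 0 ∧
    (∀ κ : ℝ, 0 ≤ κ → 0 ≤ orderParam n κ ∧ orderParam n κ < 1) ∧
    Tendsto (orderParam n) atTop (nhds 1) :=
  orderParam_bijOn_general n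
end

section
/- The order parameter satisfies c(κ)/κ → 1/n as κ → 0⁺; that is, c(κ) ∼ κ/n near κ = 0. -/
/-!
Write `N(κ) = ∫₀^π cos θ e^{κ cos θ} sin^{n-2} θ dθ` and `D(κ) = ∫₀^π e^{κ cos θ} sin^{n-2} θ dθ`,
so that `c = N / D`. Since `N(0) = 0` by symmetry, `c(κ)/κ = (N(κ)/κ) / D(κ)` is a difference
quotient of `N` at `0` divided by `D`. Differentiating under the integral sign,
`N'(0) = ∫₀^π cos² θ sin^{n-2} θ dθ`, which the Wallis reduction formula for `∫ sin^n` turns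
into `D(0)/n`; and `D(κ) → D(0) > 0`.
-/

open MeasureTheory Real Filter

open intervalIntegral in
theorem hasDerivAt_integral_pow_mul_exp_mul {φ g : ℝ → ℝ} (hφ : Continuous φ)
    (hg : Continuous g) (a b : ℝ) (k : ℕ) (κ₀ : ℝ) :
    HasDerivAt (fun κ => ∫ x in a..b, φ x ^ k * exp (κ * φ x) * g x)
      (∫ x in a..b, φ x ^ (k + 1) * exp (κ₀ * φ x) * g x) κ₀ := by
  have hderiv (x κ : ℝ) : HasDerivAt (fun κ => φ x ^ k * exp (κ * φ x) * g x)
      (φ x ^ (k + 1) * exp (κ * φ x) * g x) κ := by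
    exact ((((hasDerivAt_mul_const (φ x)).exp).const_mul (φ x ^ k)).mul_const (g x)).congr_deriv
      (by ring)
  have hbound (x : ℝ) : ∀ κ ∈ Metric.ball κ₀ 1,
      ‖φ x ^ (k + 1) * exp (κ * φ x) * g x‖ ≤
        |φ x| ^ (k + 1) * exp ((|κ₀| + 1) * |φ x|) * |g x| := by
    intro κ hκ
    have hκ' : |κ| ≤ |κ₀| + 1 := by
      have := abs_sub_abs_le_abs_sub κ κ₀
      rw [Metric.mem_ball, dist_eq_norm, norm_eq_abs] at hκ
      linarith
    have hexp : κ * φ x ≤ (|κ₀| + 1) * |φ x| :=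
      (le_abs_self _).trans ((abs_mul κ (φ x)).trans_le
        (mul_le_mul_of_nonneg_right hκ' (abs_nonneg _)))
    rw [norm_mul, norm_mul, norm_pow, norm_eq_abs, norm_eq_abs, norm_eq_abs, abs_exp]
    gcongr
  refine (hasDerivAt_integral_of_dominated_loc_of_deriv_le (Metric.ball_mem_nhds κ₀ one_pos)
    (.of_forall fun κ => (by fun_prop : Continuous _).aestronglyMeasurable)
    ((by fun_prop : Continuous _).intervalIntegrable a b)
    ((by fun_prop : Continuous _).aestronglyMeasurable)
    (.of_forall fun x _ => hbound x) ((by fun_prop : Continuous _).intervalIntegrable a b)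
    (.of_forall fun x _ κ _ => hderiv x κ)).2

theorem integral_cos_mul_sin_pow (m : ℕ) :
    ∫ θ in (0:ℝ)..π, cos θ * sin θ ^ m = 0 := by
  have hderiv (θ : ℝ) : HasDerivAt (fun x => sin x ^ (m + 1) / (m + 1))
      (cos θ * sin θ ^ m) θ := by
    refine (((hasDerivAt_sin θ).fun_pow (m + 1)).div_const ((m : ℝ) + 1)).congr_deriv ?_
    field_simp
    push_cast
    ring
  rw [intervalIntegral.integral_eq_sub_of_hasDerivAt (fun θ _ => hderiv θ)
    ((by fun_prop : Continuous _).intervalIntegrable 0 π)]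
  simp

theorem integral_cos_sq_mul_sin_pow (m : ℕ) :
    ∫ θ in (0:ℝ)..π, cos θ ^ 2 * sin θ ^ m = (∫ θ in (0:ℝ)..π, sin θ ^ m) / (m + 2) := by
  have hsplit : ∫ θ in (0:ℝ)..π, cos θ ^ 2 * sin θ ^ m
      = (∫ θ in (0:ℝ)..π, sin θ ^ m) - ∫ θ in (0:ℝ)..π, sin θ ^ (m + 2) := by
    rw [← intervalIntegral.integral_sub ((by fun_prop : Continuous _).intervalIntegrable 0 π)
      ((by fun_prop : Continuous _).intervalIntegrable 0 π)]
    congr with θ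
    linear_combination sin θ ^ m * sin_sq_add_cos_sq θ
  rw [hsplit, integral_sin_pow, sin_zero, sin_pi, zero_pow (Nat.succ_ne_zero m)]
  field_simp
  ring

/-- The order parameter satisfies `c(κ)/κ → 1/n` as `κ → 0⁺`. -/
theorem orderParam_div_tendsto_one_div_n (n : ℕ) (hn : 2 ≤ n) :
    Tendsto (fun κ : ℝ => orderParam n κ / κ) (nhdsWithin 0 (Set.Ioi 0))
      (nhds (1 / (n : ℝ))) := by
  set S := ∫ θ in (0:ℝ)..π, sin θ ^ (n - 2)
  have hS : 0 < S := integral_sin_pow_pos _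
  have hn_cast : (n : ℝ) = ((n - 2 : ℕ) : ℝ) + 2 := by rw [Nat.cast_sub hn]; ring
  have hnum := hasDerivAt_integral_pow_mul_exp_mul continuous_cos
    (g := fun θ => sin θ ^ (n - 2)) (by fun_prop) 0 π 1 0
  have hden := (hasDerivAt_integral_pow_mul_exp_mul continuous_cos
    (g := fun θ => sin θ ^ (n - 2)) (by fun_prop) 0 π 0 0).continuousAt.tendsto.mono_left
      (nhdsWithin_le_nhds (s := Set.Ioi 0))
  simp only [pow_one, pow_zero, one_mul, zero_mul, exp_zero, mul_one] at hnum hden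
  rw [integral_cos_sq_mul_sin_pow, ← hn_cast] at hnum
  have hslope := hnum.tendsto_slope_zero_right
  simp only [zero_add, zero_mul, exp_zero, mul_one, integral_cos_mul_sin_pow, sub_zero,
    smul_eq_mul] at hslope
  convert hslope.div hden hS.ne' using 2 with κ
  · rw [orderParam, Pi.div_apply, inv_mul_eq_div, div_right_comm]
  · rw [div_right_comm, div_self hS.ne']
end

section
/- The function κ ↦ c(κ)/κ is strictly decreasing on (0,∞). -/
/-!
Integrating by parts, `c(κ) = κ Z_n(κ) / ((n - 1) Z_{n-2}(κ))` with
`Z_k(κ) = ∫₀^π sin^k θ e^{κ cos θ} dθ`, so it suffices that `Z_{k+2} / Z_k` is strictly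
decreasing on `κ ≥ 0`. As `Z_k` is even in `κ`, the weight `e^{κ cos θ}` may be replaced by
`cosh (κ cos θ)`. Symmetrizing the double integral for
`Z_{k+2}(κ₁) Z_k(κ₂) - Z_{k+2}(κ₂) Z_k(κ₁)` in `(θ, φ)` and writing `x = cos θ`, `y = cos φ`
gives the integrand `sin^k θ sin^k φ (y² - x²) (cosh κ₁x cosh κ₂y - cosh κ₂x cosh κ₁y)`.
It is nonnegative for `κ₁² ≤ κ₂²`: expand `cosh a cosh b = (cosh (a + b) + cosh (a - b)) / 2`
and use `(κ₁x ± κ₂y)² - (κ₂x ± κ₁y)² = (κ₂² - κ₁²)(y² - x²)`.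
-/

open MeasureTheory Real Filter

open Set

theorem setIntegral_pos_of_continuous_of_nonneg {X : Type*} [TopologicalSpace X]
    [MeasurableSpace X] [OpensMeasurableSpace X] {μ : Measure X} [μ.IsOpenPosMeasure]
    {f : X → ℝ} {s : Set X} {x : X} (hf : Continuous f) (hs : MeasurableSet s)
    (hfs : IntegrableOn f s μ) (h_nonneg : ∀ y ∈ s, 0 ≤ f y) (hx : x ∈ interior s)
    (hfx : 0 < f x) : 0 < ∫ y in s, f y ∂μ := by
  rw [setIntegral_pos_iff_support_of_nonneg_ae (ae_restrict_of_forall_mem hs h_nonneg) hfs]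
  exact ((hf.isOpen_support.inter isOpen_interior).measure_pos μ ⟨x, hfx.ne', hx⟩).trans_le
    (measure_mono (inter_subset_inter_right _ interior_subset))

theorem integral_prod_sub_mul_sub_eq_two_mul {α : Type*} [MeasurableSpace α] {μ : Measure α}
    [SFinite μ] {a f g : α → ℝ} (haf : Integrable (fun x => a x * f x) μ)
    (hag : Integrable (fun x => a x * g x) μ) (hf : Integrable f μ) (hg : Integrable g μ) :
    ∫ p, (a p.1 - a p.2) * (f p.1 * g p.2 - g p.1 * f p.2) ∂μ.prod μ =
      2 * ((∫ x, a x * f x ∂μ) * (∫ x, g x ∂μ) - (∫ x, a x * g x ∂μ) * ∫ x, f x ∂μ) := by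
  have expand : (fun p : α × α => (a p.1 - a p.2) * (f p.1 * g p.2 - g p.1 * f p.2)) =
      fun p => a p.1 * f p.1 * g p.2 - a p.1 * g p.1 * f p.2 - f p.1 * (a p.2 * g p.2)
        + g p.1 * (a p.2 * f p.2) := by
    ext p; ring
  have h₁ := haf.mul_prod hg
  have h₂ := hag.mul_prod hf
  have h₃ := hf.mul_prod hag
  rw [expand, integral_add, integral_sub, integral_sub,
    integral_prod_mul (fun x => a x * f x) g, integral_prod_mul (fun x => a x * g x) f,
    integral_prod_mul f (fun x => a x * g x), integral_prod_mul g (fun x => a x * f x)]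
  · ring
  exacts [h₁, h₂, h₁.sub h₂, h₃, (h₁.sub h₂).sub h₃, hg.mul_prod haf]

theorem sq_sub_sq_mul_cosh_add_sub_cosh_add_nonneg {κ₁ κ₂ : ℝ} (hκ : κ₁ ^ 2 ≤ κ₂ ^ 2)
    (x y : ℝ) :
    0 ≤ (y ^ 2 - x ^ 2) * (cosh (κ₁ * x + κ₂ * y) - cosh (κ₂ * x + κ₁ * y)) := by
  have hsq : (κ₁ * x + κ₂ * y) ^ 2 - (κ₂ * x + κ₁ * y) ^ 2 =
      (κ₂ ^ 2 - κ₁ ^ 2) * (y ^ 2 - x ^ 2) := by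
    ring
  rcases le_total (x ^ 2) (y ^ 2) with h | h
  · refine mul_nonneg (by linarith) (sub_nonneg.2 (cosh_le_cosh.2 (sq_le_sq.1 ?_)))
    nlinarith
  · refine mul_nonneg_of_nonpos_of_nonpos (by linarith)
      (sub_nonpos.2 (cosh_le_cosh.2 (sq_le_sq.1 ?_)))
    nlinarith

theorem sq_sub_sq_mul_cosh_mul_cosh_sub_nonneg {κ₁ κ₂ : ℝ} (hκ : κ₁ ^ 2 ≤ κ₂ ^ 2) (x y : ℝ) :
    0 ≤ (y ^ 2 - x ^ 2) * (cosh (κ₁ * x) * cosh (κ₂ * y) - cosh (κ₂ * x) * cosh (κ₁ * y)) := by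
  have h_add := sq_sub_sq_mul_cosh_add_sub_cosh_add_nonneg hκ x y
  have h_sub := sq_sub_sq_mul_cosh_add_sub_cosh_add_nonneg hκ x (-y)
  have cosh_mul_cosh (u v : ℝ) : cosh u * cosh v = (cosh (u + v) + cosh (u - v)) / 2 := by
    rw [cosh_add, cosh_sub]; ring
  rw [cosh_mul_cosh, cosh_mul_cosh]
  simp only [neg_sq, mul_neg, ← sub_eq_add_neg] at h_sub
  nlinarith

noncomputable def vonMisesNormalizer (k : ℕ) (κ : ℝ) : ℝ :=
  ∫ θ in (0)..π, sin θ ^ k * exp (κ * cos θ)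

noncomputable def coshWeight (k : ℕ) (κ θ : ℝ) : ℝ :=
  sin θ ^ k * cosh (κ * cos θ)

@[fun_prop]
theorem continuous_coshWeight (k : ℕ) (κ : ℝ) : Continuous (coshWeight k κ) := by
  unfold coshWeight; fun_prop

theorem vonMisesNormalizer_pos (k : ℕ) (κ : ℝ) : 0 < vonMisesNormalizer k κ :=
  intervalIntegral.intervalIntegral_pos_of_pos_on
    ((by fun_prop : Continuous _).intervalIntegrable _ _)
    (fun θ hθ => mul_pos (pow_pos (sin_pos_of_pos_of_lt_pi hθ.1 hθ.2) k) (exp_pos _)) pi_pos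

theorem vonMisesNormalizer_neg (k : ℕ) (κ : ℝ) :
    vonMisesNormalizer k (-κ) = vonMisesNormalizer k κ := by
  have := intervalIntegral.integral_comp_sub_left
    (fun θ => sin θ ^ k * exp (κ * cos θ)) (a := 0) (b := π) π
  simp only [sin_pi_sub, cos_pi_sub, sub_zero, sub_self] at this
  simpa only [vonMisesNormalizer, mul_neg, neg_mul] using this

theorem vonMisesNormalizer_eq_setIntegral_coshWeight (k : ℕ) (κ : ℝ) :
    vonMisesNormalizer k κ = ∫ θ in Ioc 0 π, coshWeight k κ θ := by
  rw [← intervalIntegral.integral_of_le pi_pos.le]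
  have h : (∫ θ in (0)..π, coshWeight k κ θ) =
      (vonMisesNormalizer k κ + vonMisesNormalizer k (-κ)) / 2 := by
    simp only [coshWeight, vonMisesNormalizer, cosh_eq, mul_div_assoc', mul_add, neg_mul]
    rw [intervalIntegral.integral_div, intervalIntegral.integral_add
      ((by fun_prop : Continuous _).intervalIntegrable _ _)
      ((by fun_prop : Continuous _).intervalIntegrable _ _)]
  rw [h, vonMisesNormalizer_neg]
  ring

theorem integral_cos_mul_exp_mul_sin_pow (m : ℕ) (κ : ℝ) :
    ∫ θ in (0)..π, cos θ * exp (κ * cos θ) * sin θ ^ m =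
      κ / (m + 1) * vonMisesNormalizer (m + 2) κ := by
  have hderiv (θ : ℝ) : HasDerivAt (fun θ => exp (κ * cos θ) * sin θ ^ (m + 1))
      ((m + 1) * (cos θ * exp (κ * cos θ) * sin θ ^ m)
        - κ * (sin θ ^ (m + 2) * exp (κ * cos θ))) θ := by
    refine (((hasDerivAt_cos θ).const_mul κ).exp.mul
      ((hasDerivAt_sin θ).pow (m + 1))).congr_deriv ?_
    rw [Pi.pow_apply]
    push_cast
    ring
  have hFTC := intervalIntegral.integral_eq_sub_of_hasDerivAt (a := 0) (b := π)
    (fun θ _ => hderiv θ) ((by fun_prop : Continuous _).intervalIntegrable _ _)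
  rw [intervalIntegral.integral_sub ((by fun_prop : Continuous _).intervalIntegrable _ _)
      ((by fun_prop : Continuous _).intervalIntegrable _ _),
    intervalIntegral.integral_const_mul, intervalIntegral.integral_const_mul] at hFTC
  simp only [sin_pi, sin_zero, ne_eq, Nat.add_eq_zero_iff, one_ne_zero, and_false,
    not_false_eq_true, zero_pow, mul_zero, sub_self] at hFTC
  rw [div_mul_eq_mul_div, eq_div_iff (by positivity), vonMisesNormalizer]
  linarith

theorem orderParam_add_two (m : ℕ) (κ : ℝ) :
    orderParam (m + 2) κ =
      κ / (m + 1) * (vonMisesNormalizer (m + 2) κ / vonMisesNormalizer m κ) := by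
  simp only [orderParam, Nat.add_sub_cancel, integral_cos_mul_exp_mul_sin_pow, mul_div_assoc]
  congr 3
  ext θ
  exact mul_comm _ _

theorem sin_sq_sub_sin_sq_mul_coshWeight_nonneg (k : ℕ) {κ₁ κ₂ θ φ : ℝ}
    (hκ : κ₁ ^ 2 ≤ κ₂ ^ 2) (hθ : θ ∈ Icc 0 π) (hφ : φ ∈ Icc 0 π) :
    0 ≤ (sin θ ^ 2 - sin φ ^ 2) *
      (coshWeight k κ₁ θ * coshWeight k κ₂ φ - coshWeight k κ₂ θ * coshWeight k κ₁ φ) := by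
  have factor : (sin θ ^ 2 - sin φ ^ 2) *
      (coshWeight k κ₁ θ * coshWeight k κ₂ φ - coshWeight k κ₂ θ * coshWeight k κ₁ φ) =
      sin θ ^ k * sin φ ^ k * ((cos φ ^ 2 - cos θ ^ 2) *
        (cosh (κ₁ * cos θ) * cosh (κ₂ * cos φ) - cosh (κ₂ * cos θ) * cosh (κ₁ * cos φ))) := by
    simp only [coshWeight, sin_sq]
    ring
  rw [factor]
  exact mul_nonneg (mul_nonneg (pow_nonneg (sin_nonneg_of_nonneg_of_le_pi hθ.1 hθ.2) k)
    (pow_nonneg (sin_nonneg_of_nonneg_of_le_pi hφ.1 hφ.2) k))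
    (sq_sub_sq_mul_cosh_mul_cosh_sub_nonneg hκ _ _)

theorem setIntegral_sin_sq_sub_mul_coshWeight_pos (k : ℕ) {κ₁ κ₂ : ℝ} (hκ₁ : 0 ≤ κ₁)
    (hlt : κ₁ < κ₂) :
    0 < ∫ p in Ioc 0 π ×ˢ Ioc 0 π, (sin p.1 ^ 2 - sin p.2 ^ 2) *
      (coshWeight k κ₁ p.1 * coshWeight k κ₂ p.2 - coshWeight k κ₂ p.1 * coshWeight k κ₁ p.2) := by
  have hF : Continuous fun p : ℝ × ℝ => (sin p.1 ^ 2 - sin p.2 ^ 2) *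
      (coshWeight k κ₁ p.1 * coshWeight k κ₂ p.2 - coshWeight k κ₂ p.1 * coshWeight k κ₁ p.2) := by
    fun_prop
  have := pi_pos
  -- At `φ = π/2` the weight `coshWeight k κ φ` is `1` for every `κ`.
  refine setIntegral_pos_of_continuous_of_nonneg (x := (π / 3, π / 2)) hF
    (measurableSet_Ioc.prod measurableSet_Ioc)
    ((hF.continuousOn.integrableOn_compact (isCompact_Icc.prod isCompact_Icc)).mono_set
      (prod_mono Ioc_subset_Icc_self Ioc_subset_Icc_self))
    (fun p hp => sin_sq_sub_sin_sq_mul_coshWeight_nonneg k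
      (pow_le_pow_left₀ hκ₁ hlt.le 2) (Ioc_subset_Icc_self hp.1) (Ioc_subset_Icc_self hp.2))
    (mem_interior_iff_mem_nhds.2 (prod_mem_nhds (Ioc_mem_nhds (by positivity) (by linarith))
      (Ioc_mem_nhds (by positivity) (by linarith)))) ?_
  have hcosh : cosh (κ₁ / 2) < cosh (κ₂ / 2) := by
    rw [cosh_lt_cosh, abs_of_nonneg (div_nonneg hκ₁ zero_le_two),
      abs_of_nonneg (div_nonneg (hκ₁.trans hlt.le) zero_le_two)]
    linarith
  have hsin : (√3 / 2) ^ 2 - 1 < (0 : ℝ) := by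
    rw [div_pow, sq_sqrt zero_le_three]; norm_num
  simp only [coshWeight, sin_pi_div_two, cos_pi_div_two, cos_pi_div_three, sin_pi_div_three,
    one_pow, mul_zero, cosh_zero, mul_one, mul_one_div, ← mul_sub]
  exact mul_pos_of_neg_of_neg hsin (mul_neg_of_pos_of_neg (by positivity) (sub_neg.2 hcosh))

theorem vonMisesNormalizer_div_strictAntiOn (k : ℕ) :
    StrictAntiOn (fun κ => vonMisesNormalizer (k + 2) κ / vonMisesNormalizer k κ) (Ici 0) := by
  intro κ₁ hκ₁ κ₂ _ hlt
  rw [div_lt_div_iff₀ (vonMisesNormalizer_pos _ _) (vonMisesNormalizer_pos _ _), ← sub_pos]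
  have hZ₂ (κ : ℝ) : vonMisesNormalizer (k + 2) κ =
      ∫ θ in Ioc 0 π, sin θ ^ 2 * coshWeight k κ θ := by
    rw [vonMisesNormalizer_eq_setIntegral_coshWeight]
    congr 1 with θ
    simp only [coshWeight]
    ring
  have hint {f : ℝ → ℝ} (hf : Continuous f) : IntegrableOn f (Ioc 0 π) := hf.integrableOn_Ioc
  have hsymm := integral_prod_sub_mul_sub_eq_two_mul (a := fun θ => sin θ ^ 2)
    (f := coshWeight k κ₁) (g := coshWeight k κ₂) (hint (by fun_prop)) (hint (by fun_prop))
    (hint (by fun_prop)) (hint (by fun_prop))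
  rw [← hZ₂, ← hZ₂, ← vonMisesNormalizer_eq_setIntegral_coshWeight,
    ← vonMisesNormalizer_eq_setIntegral_coshWeight, Measure.prod_restrict,
    ← Measure.volume_eq_prod] at hsymm
  linarith [setIntegral_sin_sq_sub_mul_coshWeight_pos k hκ₁ hlt]

/-- The function `κ ↦ c(κ)/κ` is strictly decreasing on `(0,∞)`. -/
theorem orderParam_div_strictAnti (n : ℕ) (hn : 2 ≤ n) :
    StrictAntiOn (fun κ : ℝ => orderParam n κ / κ) (Set.Ioi 0) := by
  obtain ⟨m, rfl⟩ := Nat.exists_eq_add_of_le' hn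
  have hratio : ∀ κ ∈ Ioi (0 : ℝ), orderParam (m + 2) κ / κ =
      (m + 1 : ℝ)⁻¹ * (vonMisesNormalizer (m + 2) κ / vonMisesNormalizer m κ) := by
    intro κ hκ
    rw [orderParam_add_two]
    field_simp [(mem_Ioi.1 hκ).ne']
  intro κ₁ hκ₁ κ₂ hκ₂ hlt
  dsimp only
  rw [hratio κ₁ hκ₁, hratio κ₂ hκ₂]
  exact mul_lt_mul_of_pos_left (vonMisesNormalizer_div_strictAntiOn m
    (Ioi_subset_Ici_self hκ₁) (Ioi_subset_Ici_self hκ₂) hlt) (by positivity)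
end

section
/- The function φ defined on [0, κ_max) by φ(κ) = c(κ)/σ(κ) for κ > 0 and φ(0) = 1/ρ_c is continuous on [0, κ_max) and attains its maximum; consequently ρ_* := 1/(max_{[0,κ_max)} φ) satisfies 0 < ρ_* ≤ ρ_c, and ρ_* = min over κ ∈ [0, κ_max) of σ(κ)/c(κ) (with the value at κ = 0 understood as ρ_c). -/
open MeasureTheory Real Filter

/-!
Write `c = N / Z` with `N κ = ∫ cos θ sin^{n-2} θ e^{κ cos θ}`, `Z κ = ∫ sin^{n-2} θ e^{κ cos θ}`
over `[0, π]`. Then `N 0 = 0` and, differentiating under the integral sign,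
`N' 0 = ∫ cos² θ sin^{n-2} θ = Z 0 / n`, so `c κ / κ → 1 / n`. Since `h r / r → L`, also
`κ / σ κ → L`, and `φ = (c κ / κ) (κ / σ κ)` tends to `L / n = 1 / ρ_c` at `0`. Continuity of `σ`
is automatic: an order isomorphism between intervals is a homeomorphism. Finally `c ≤ 1`, so
`φ κ ≤ 1 / σ κ < 1 / ρ_c = φ 0` once `κ > h ρ_c`, and the maximum of `φ` is attained on the
compact interval `[0, h ρ_c]`.
-/

open Set Topology

theorem StrictMonoOn.continuousOn_of_leftInvOn {α β : Type*} [LinearOrder α] [TopologicalSpace α]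
    [OrderTopology α] [LinearOrder β] [TopologicalSpace β] [OrderTopology β]
    {f : α → β} {g : β → α} {s : Set α} [s.OrdConnected] (hf : StrictMonoOn f s)
    (hgf : LeftInvOn g f s) (hfs : (f '' s).OrdConnected) : ContinuousOn g (f '' s) := by
  let e := hf.orderIso f s
  have hge : (f '' s).domRestrict g = Subtype.val ∘ e.symm := by
    ext y
    obtain ⟨x, rfl⟩ := e.surjective y
    simp only [domRestrict_apply, Function.comp_apply, OrderIso.symm_apply_apply]
    exact hgf x.2
  rw [continuousOn_iff_continuous_domRestrict, hge]
  exact continuous_subtype_val.comp e.symm.continuous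

theorem continuousOn_ite_div {X : Type*} [TopologicalSpace X] [T1Space X] [DecidableEq X]
    {f g : X → ℝ} {S : Set X} {x₀ : X} {a : ℝ} (hf : ContinuousOn f S) (hg : ContinuousOn g S)
    (hg0 : ∀ x ∈ S, x ≠ x₀ → g x ≠ 0)
    (hlim : Tendsto (fun x => f x / g x) (𝓝[S \ {x₀}] x₀) (𝓝 a)) :
    ContinuousOn (fun x => if x = x₀ then a else f x / g x) S := by
  have hupdate : (fun x => if x = x₀ then a else f x / g x) =
      Function.update (fun x => f x / g x) x₀ a := by
    ext x
    rw [Function.update_apply]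
  rw [hupdate, continuousOn_update_iff]
  exact ⟨(hf.mono sdiff_subset).div (hg.mono sdiff_subset) fun x hx => hg0 x hx.1 hx.2,
    fun _ => hlim⟩

theorem ContinuousOn.exists_isMaxOn_of_le_off {X α : Type*} [TopologicalSpace X] [LinearOrder α]
    [TopologicalSpace α] [ClosedIciTopology α] {f : X → α} {S K : Set X} (hf : ContinuousOn f S)
    (hK : IsCompact K) (hKS : K ⊆ S) {a : X} (ha : a ∈ K) (hout : ∀ x ∈ S \ K, f x ≤ f a) :
    ∃ x₀ ∈ S, IsMaxOn f S x₀ := by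
  obtain ⟨x₀, hx₀, hmax⟩ := hK.exists_isMaxOn ⟨a, ha⟩ (hf.mono hKS)
  refine ⟨x₀, hKS hx₀, fun x hx => ?_⟩
  by_cases hxK : x ∈ K
  · exact hmax hxK
  · exact (hout x ⟨hx, hxK⟩).trans (hmax ha)

theorem IsMaxOn.isLeast_image_one_div {X : Type*} {f : X → ℝ} {S : Set X} {x₀ : X}
    (hmax : IsMaxOn f S x₀) (hx₀ : x₀ ∈ S) (hpos : ∀ x ∈ S, 0 < f x) :
    IsLeast ((fun x => 1 / f x) '' S) (1 / f x₀) :=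
  ⟨mem_image_of_mem _ hx₀,
    forall_mem_image.2 fun x hx => one_div_le_one_div_of_le (hpos x hx) (hmax hx)⟩

theorem hasDerivAt_intervalIntegral_mul_exp_mul {f u : ℝ → ℝ} (hf : Continuous f)
    (hu : Continuous u) (a b κ : ℝ) :
    HasDerivAt (fun κ => ∫ θ in a..b, f θ * exp (κ * u θ))
      (∫ θ in a..b, f θ * u θ * exp (κ * u θ)) κ := by
  have hbound : ∀ θ, ∀ x ∈ Metric.ball κ 1,
      ‖f θ * u θ * exp (x * u θ)‖ ≤ |f θ * u θ| * exp ((|κ| + 1) * |u θ|) := by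
    intro θ x hx
    have hx : |x| ≤ |κ| + 1 := by
      have := abs_sub_abs_le_abs_sub x κ
      rw [Metric.mem_ball, dist_eq] at hx
      linarith
    rw [norm_mul, norm_of_nonneg (exp_pos _).le, Real.norm_eq_abs]
    refine mul_le_mul_of_nonneg_left (exp_le_exp.2 ?_) (abs_nonneg _)
    calc x * u θ ≤ |x| * |u θ| := (le_abs_self _).trans (abs_mul _ _).le
      _ ≤ (|κ| + 1) * |u θ| := by gcongr
  refine (intervalIntegral.hasDerivAt_integral_of_dominated_loc_of_deriv_le
    (F := fun x θ => f θ * exp (x * u θ)) (F' := fun x θ => f θ * u θ * exp (x * u θ))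
    (bound := fun θ => |f θ * u θ| * exp ((|κ| + 1) * |u θ|))
    (Metric.ball_mem_nhds κ one_pos) ?_ ?_ ?_ ?_ ?_ ?_).2
  · exact .of_forall fun x => (by fun_prop : Continuous _).aestronglyMeasurable
  · exact (by fun_prop : Continuous _).intervalIntegrable _ _
  · exact (by fun_prop : Continuous _).aestronglyMeasurable
  · exact .of_forall fun θ _ => hbound θ
  · exact (by fun_prop : Continuous _).intervalIntegrable _ _
  · refine .of_forall fun θ _ x _ => ?_
    simpa [mul_comm, mul_left_comm, mul_assoc] using
      ((hasDerivAt_mul_const (u θ)).exp.const_mul (f θ))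

theorem mul_exp_mul_sub_one_nonneg {κ : ℝ} (hκ : 0 ≤ κ) (t : ℝ) :
    0 ≤ t * (exp (κ * t) - 1) := by
  rcases le_total 0 t with ht | ht
  · exact mul_nonneg ht (sub_nonneg.2 (one_le_exp (mul_nonneg hκ ht)))
  · exact mul_nonneg_of_nonpos_of_nonpos ht
      (sub_nonpos.2 (exp_le_one_iff.2 (mul_nonpos_of_nonneg_of_nonpos hκ ht)))

noncomputable def cosExpIntegral (w : ℝ → ℝ) (κ : ℝ) : ℝ :=
  ∫ θ in 0..π, w θ * exp (κ * cos θ)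

section cosExpIntegral

variable {w v : ℝ → ℝ}

theorem hasDerivAt_cosExpIntegral (hw : Continuous w) (κ : ℝ) :
    HasDerivAt (cosExpIntegral w) (cosExpIntegral (fun θ => w θ * cos θ) κ) κ :=
  hasDerivAt_intervalIntegral_mul_exp_mul hw continuous_cos 0 π κ

theorem continuous_cosExpIntegral (hw : Continuous w) : Continuous (cosExpIntegral w) :=
  continuous_iff_continuousAt.2 fun κ => (hasDerivAt_cosExpIntegral hw κ).continuousAt

theorem cosExpIntegral_pos (hw : Continuous w) (hpos : ∀ θ ∈ Ioo 0 π, 0 < w θ) (κ : ℝ) :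
    0 < cosExpIntegral w κ :=
  intervalIntegral.intervalIntegral_pos_of_pos_on
    ((by fun_prop : Continuous _).intervalIntegrable _ _)
    (fun θ hθ => mul_pos (hpos θ hθ) (exp_pos _)) pi_pos

theorem cosExpIntegral_mono (hw : Continuous w) (hv : Continuous v)
    (hle : ∀ θ ∈ Icc 0 π, w θ ≤ v θ) (κ : ℝ) : cosExpIntegral w κ ≤ cosExpIntegral v κ :=
  intervalIntegral.integral_mono_on pi_pos.le ((by fun_prop : Continuous _).intervalIntegrable _ _)
    ((by fun_prop : Continuous _).intervalIntegrable _ _)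
    (fun θ hθ => mul_le_mul_of_nonneg_right (hle θ hθ) (exp_pos _).le)

theorem cosExpIntegral_sub_zero (hw : Continuous w) (κ : ℝ) :
    cosExpIntegral w κ - cosExpIntegral w 0 = ∫ θ in 0..π, w θ * (exp (κ * cos θ) - 1) := by
  unfold cosExpIntegral
  rw [← intervalIntegral.integral_sub ((by fun_prop : Continuous _).intervalIntegrable _ _)
    ((by fun_prop : Continuous _).intervalIntegrable _ _)]
  simp only [zero_mul, exp_zero, mul_sub, mul_one]

end cosExpIntegral

section sinPowWeight

variable (m : ℕ)

theorem cosExpIntegral_sin_pow_pos (κ : ℝ) : 0 < cosExpIntegral (fun θ => sin θ ^ m) κ :=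
  cosExpIntegral_pos (by fun_prop) (fun θ hθ => pow_pos (sin_pos_of_pos_of_lt_pi hθ.1 hθ.2) _) κ

theorem cosExpIntegral_cos_mul_sin_pow_zero :
    cosExpIntegral (fun θ => cos θ * sin θ ^ m) 0 = 0 := by
  have := integral_sin_pow_mul_cos_pow_odd (a := 0) (b := π) m 0
  simp only [cosExpIntegral, zero_mul, exp_zero, mul_one]
  simpa [mul_comm] using this

theorem cosExpIntegral_cos_mul_sin_pow_pos {κ : ℝ} (hκ : 0 < κ) :
    0 < cosExpIntegral (fun θ => cos θ * sin θ ^ m) κ := by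
  -- subtracting the value `0` at `κ = 0` makes the integrand nonnegative, and positive on `(0, π/2)`
  have hsub := cosExpIntegral_sub_zero (w := fun θ => cos θ * sin θ ^ m) (by fun_prop) κ
  rw [cosExpIntegral_cos_mul_sin_pow_zero, sub_zero] at hsub
  rw [hsub]
  have hnonneg : ∀ θ ∈ Icc 0 π, 0 ≤ cos θ * sin θ ^ m * (exp (κ * cos θ) - 1) := fun θ hθ => by
    rw [mul_right_comm]
    exact mul_nonneg (mul_exp_mul_sub_one_nonneg hκ.le _) (pow_nonneg (sin_nonneg_of_mem_Icc hθ) _)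
  have hint : ∀ a b, IntervalIntegrable (fun θ => cos θ * sin θ ^ m * (exp (κ * cos θ) - 1))
      MeasureTheory.volume a b := fun a b => (by fun_prop : Continuous _).intervalIntegrable a b
  rw [← intervalIntegral.integral_add_adjacent_intervals (hint 0 (π / 2)) (hint (π / 2) π)]
  refine add_pos_of_pos_of_nonneg ?_ (intervalIntegral.integral_nonneg (by linarith [pi_pos])
    fun θ hθ => hnonneg θ ⟨by linarith [pi_pos, hθ.1], hθ.2⟩)
  refine intervalIntegral.intervalIntegral_pos_of_pos_on (hint _ _) (fun θ hθ => ?_) (by positivity)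
  have hcos : 0 < cos θ := cos_pos_of_mem_Ioo ⟨by linarith [hθ.1, pi_pos], hθ.2⟩
  have hsin : 0 < sin θ := sin_pos_of_pos_of_lt_pi hθ.1 (by linarith [hθ.2, pi_pos])
  have hexp : 0 < exp (κ * cos θ) - 1 := sub_pos.2 (one_lt_exp_iff.2 (mul_pos hκ hcos))
  positivity

theorem cosExpIntegral_cos_mul_sin_pow_mul_cos_zero :
    cosExpIntegral (fun θ => cos θ * sin θ ^ m * cos θ) 0 =
      cosExpIntegral (fun θ => sin θ ^ m) 0 / (m + 2) := by
  simp only [cosExpIntegral, zero_mul, exp_zero, mul_one]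
  have hcos_sq : ∀ θ, cos θ * sin θ ^ m * cos θ = sin θ ^ m - sin θ ^ (m + 2) := fun θ => by
    rw [pow_add]; linear_combination sin θ ^ m * sin_sq_add_cos_sq θ
  simp_rw [hcos_sq]
  rw [intervalIntegral.integral_sub ((by fun_prop : Continuous _).intervalIntegrable _ _)
    ((by fun_prop : Continuous _).intervalIntegrable _ _), integral_sin_pow]
  simp only [sin_zero, sin_pi]
  field_simp
  ring

end sinPowWeight

section orderParam

variable (n : ℕ)

theorem orderParam_eq (κ : ℝ) :
    orderParam n κ = cosExpIntegral (fun θ => cos θ * sin θ ^ (n - 2)) κ /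
      cosExpIntegral (fun θ => sin θ ^ (n - 2)) κ := by
  simp only [orderParam, cosExpIntegral, mul_right_comm _ (exp _), mul_comm (exp _)]

theorem continuous_orderParam : Continuous (orderParam n) := by
  simp only [funext (orderParam_eq n)]
  exact (continuous_cosExpIntegral (by fun_prop)).div (continuous_cosExpIntegral (by fun_prop))
    fun κ => (cosExpIntegral_sin_pow_pos _ κ).ne'

theorem orderParam_le_one (κ : ℝ) : orderParam n κ ≤ 1 := by
  rw [orderParam_eq, div_le_one (cosExpIntegral_sin_pow_pos _ κ)]
  refine cosExpIntegral_mono (by fun_prop) (by fun_prop) (fun θ hθ => ?_) κ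
  exact mul_le_of_le_one_left (pow_nonneg (sin_nonneg_of_mem_Icc hθ) _) (cos_le_one θ)

theorem orderParam_pos {κ : ℝ} (hκ : 0 < κ) : 0 < orderParam n κ := by
  rw [orderParam_eq]
  exact div_pos (cosExpIntegral_cos_mul_sin_pow_pos _ hκ) (cosExpIntegral_sin_pow_pos _ κ)

theorem tendsto_orderParam_div_self (hn : 2 ≤ n) :
    Tendsto (fun κ => orderParam n κ / κ) (𝓝[≠] 0) (𝓝 (1 / n)) := by
  set m := n - 2
  have hslope := hasDerivAt_iff_tendsto_slope.1
    (hasDerivAt_cosExpIntegral (w := fun θ => cos θ * sin θ ^ m) (by fun_prop) 0)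
  rw [cosExpIntegral_cos_mul_sin_pow_mul_cos_zero] at hslope
  have hZ := ((continuous_cosExpIntegral (w := fun θ => sin θ ^ m) (by fun_prop)).tendsto 0)
    |>.mono_left (nhdsWithin_le_nhds (s := {0}ᶜ))
  have hlim := hslope.div hZ (cosExpIntegral_sin_pow_pos m 0).ne'
  have hn' : (n : ℝ) = m + 2 := by rw [← Nat.sub_add_cancel hn]; push_cast; rfl
  rw [div_div_cancel_left' (cosExpIntegral_sin_pow_pos m 0).ne', ← hn', ← one_div] at hlim
  refine hlim.congr fun κ => ?_
  rw [Pi.div_apply, slope_def_field, cosExpIntegral_cos_mul_sin_pow_zero, sub_zero, sub_zero,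
    orderParam_eq, div_right_comm]

end orderParam

noncomputable def orderParamRatio (n : ℕ) (σ : ℝ → ℝ) (a κ : ℝ) : ℝ :=
  if κ = 0 then a else orderParam n κ / σ κ

namespace Set.LeftInvOn

variable {h σ : ℝ → ℝ}

theorem pos_of_ne_zero (hσ : LeftInvOn σ h (Ici 0)) (h0 : h 0 = 0) {κ : ℝ}
    (hκ : κ ∈ h '' Ici 0) (hκ0 : κ ≠ 0) : 0 < σ κ := by
  obtain ⟨r, hr, rfl⟩ := hκ
  rw [hσ hr]
  exact lt_of_le_of_ne hr fun hr0 => hκ0 (hr0 ▸ h0)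

theorem lt_of_apply_lt {s : Set ℝ} (hσ : LeftInvOn σ h s) (hmono : StrictMonoOn h s) {R κ : ℝ}
    (hR : R ∈ s) (hκ : κ ∈ h '' s) (hlt : h R < κ) : R < σ κ := by
  obtain ⟨r, hr, rfl⟩ := hκ
  rw [hσ hr]
  exact (hmono.lt_iff_lt hR hr).1 hlt

theorem tendsto_self_div {L : ℝ} (hσ : LeftInvOn σ h (Ici 0)) (h0 : h 0 = 0)
    (hσc : ContinuousOn σ (h '' Ici 0)) (hL : Tendsto (fun r => h r / r) (𝓝[>] 0) (𝓝 L)) :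
    Tendsto (fun κ => κ / σ κ) (𝓝[h '' Ici 0 \ {0}] 0) (𝓝 L) := by
  have hσ0 : σ 0 = 0 := by simpa [h0] using hσ (self_mem_Ici (a := (0 : ℝ)))
  have hσ_tendsto : Tendsto σ (𝓝[h '' Ici 0 \ {0}] 0) (𝓝[>] 0) := by
    refine tendsto_nhdsWithin_iff.2 ⟨?_, eventually_mem_nhdsWithin.mono fun κ hκ => ?_⟩
    · simpa [hσ0] using ((hσc 0 ⟨0, self_mem_Ici, h0⟩).mono sdiff_subset).tendsto
    · exact hσ.pos_of_ne_zero h0 hκ.1 hκ.2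
  refine (hL.comp hσ_tendsto).congr' (eventually_mem_nhdsWithin.mono fun κ hκ => ?_)
  rw [Function.comp_apply, hσ.rightInvOn_image hκ.1]

theorem tendsto_orderParam_div {n : ℕ} (hn : 2 ≤ n) {L : ℝ} (hσ : LeftInvOn σ h (Ici 0))
    (h0 : h 0 = 0) (hσc : ContinuousOn σ (h '' Ici 0))
    (hL : Tendsto (fun r => h r / r) (𝓝[>] 0) (𝓝 L)) :
    Tendsto (fun κ => orderParam n κ / σ κ) (𝓝[h '' Ici 0 \ {0}] 0) (𝓝 (L / n)) := by
  have hc := (tendsto_orderParam_div_self n hn).mono_left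
    (nhdsWithin_mono (0 : ℝ) (s := h '' Ici 0 \ {0}) fun κ hκ => hκ.2)
  rw [div_eq_inv_mul, ← one_div]
  refine (hc.mul (hσ.tendsto_self_div h0 hσc hL)).congr' ?_
  filter_upwards [self_mem_nhdsWithin] with κ hκ
  exact div_mul_div_cancel₀ hκ.2

variable {n : ℕ}

theorem continuousOn_orderParamRatio (hσ : LeftInvOn σ h (Ici 0)) (hmono : StrictMonoOn h (Ici 0))
    (h0 : h 0 = 0) (hconn : (h '' Ici 0).OrdConnected) (hn : 2 ≤ n) {L : ℝ}
    (hL : Tendsto (fun r => h r / r) (𝓝[>] 0) (𝓝 L)) :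
    ContinuousOn (orderParamRatio n σ (L / n)) (h '' Ici 0) :=
  have hσc := hmono.continuousOn_of_leftInvOn hσ hconn
  continuousOn_ite_div (continuous_orderParam n).continuousOn hσc
    (fun _ hκ hκ0 => (hσ.pos_of_ne_zero h0 hκ hκ0).ne') (hσ.tendsto_orderParam_div hn h0 hσc hL)

theorem orderParamRatio_pos (hσ : LeftInvOn σ h (Ici 0)) (hmono : StrictMonoOn h (Ici 0))
    (h0 : h 0 = 0) {a κ : ℝ} (ha : 0 < a) (hκ : κ ∈ h '' Ici 0) : 0 < orderParamRatio n σ a κ := by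
  by_cases hκ0 : κ = 0
  · simpa [orderParamRatio, hκ0] using ha
  · have hκ_pos : 0 < κ := (h0 ▸ hmono.monotoneOn.image_Ici_subset hκ : 0 ≤ κ).lt_of_ne' hκ0
    simpa [orderParamRatio, hκ0] using
      div_pos (orderParam_pos n hκ_pos) (hσ.pos_of_ne_zero h0 hκ hκ0)

theorem orderParamRatio_le_of_apply_lt (hσ : LeftInvOn σ h (Ici 0))
    (hmono : StrictMonoOn h (Ici 0)) (h0 : h 0 = 0) {a R κ : ℝ} (hR : 0 < R)
    (hκ : κ ∈ h '' Ici 0) (hlt : h R < κ) : orderParamRatio n σ a κ ≤ 1 / R := by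
  have hσκ : R < σ κ := hσ.lt_of_apply_lt hmono hR.le hκ hlt
  have hκ0 : κ ≠ 0 :=
    ((h0 ▸ hmono.monotoneOn.image_Ici_subset (mem_image_of_mem h hR.le) : 0 ≤ h R).trans_lt hlt).ne'
  calc orderParamRatio n σ a κ = orderParam n κ / σ κ := if_neg hκ0
    _ ≤ 1 / σ κ := div_le_div_of_nonneg_right (orderParam_le_one n κ) (hR.trans hσκ).le
    _ ≤ 1 / R := one_div_le_one_div_of_le hR hσκ.le

end Set.LeftInvOn

theorem phi_continuousOn_and_attains_max_general (n : ℕ) (hn : 2 ≤ n)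
    (h σ : ℝ → ℝ) (κmax : EReal)
    (hmono : StrictMonoOn h (Set.Ici 0))
    (h0 : h 0 = 0)
    (hrange : ∀ r : ℝ, 0 ≤ r → 0 ≤ h r ∧ (h r : EReal) < κmax)
    (hsurj : ∀ κ : ℝ, 0 ≤ κ → (κ : EReal) < κmax → ∃ r, 0 ≤ r ∧ h r = κ)
    (hσ : ∀ r : ℝ, 0 ≤ r → σ (h r) = r)
    (L : ℝ) (hLpos : 0 < L)
    (hL : Tendsto (fun r : ℝ => h r / r) (nhdsWithin 0 (Set.Ioi 0)) (nhds L))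
    (ρc : ℝ) (hρc : ρc = n / L) :
    ContinuousOn (fun κ : ℝ => if κ = 0 then 1 / ρc else orderParam n κ / σ κ)
      {κ : ℝ | 0 ≤ κ ∧ (κ : EReal) < κmax} ∧
    ∃ κ₀ ∈ {κ : ℝ | 0 ≤ κ ∧ (κ : EReal) < κmax},
      (∀ κ ∈ {κ : ℝ | 0 ≤ κ ∧ (κ : EReal) < κmax},
        (if κ = 0 then 1 / ρc else orderParam n κ / σ κ) ≤
          (if κ₀ = 0 then 1 / ρc else orderParam n κ₀ / σ κ₀)) ∧
      0 < 1 / (if κ₀ = 0 then 1 / ρc else orderParam n κ₀ / σ κ₀) ∧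
      1 / (if κ₀ = 0 then 1 / ρc else orderParam n κ₀ / σ κ₀) ≤ ρc ∧
      IsLeast ((fun κ : ℝ => if κ = 0 then ρc else σ κ / orderParam n κ) ''
          {κ : ℝ | 0 ≤ κ ∧ (κ : EReal) < κmax})
        (1 / (if κ₀ = 0 then 1 / ρc else orderParam n κ₀ / σ κ₀)) := by
  have hS : h '' Ici 0 = {κ : ℝ | 0 ≤ κ ∧ (κ : EReal) < κmax} :=
    Set.ext fun κ => ⟨by rintro ⟨r, hr, rfl⟩; exact hrange r hr, fun hκ => hsurj κ hκ.1 hκ.2⟩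
  have hconn : (h '' Ici 0).OrdConnected := hS ▸
    ⟨fun x hx y hy z hz => ⟨hx.1.trans hz.1, (EReal.coe_le_coe_iff.2 hz.2).trans_lt hy.2⟩⟩
  rw [← hS]
  replace hσ : LeftInvOn σ h (Ici 0) := hσ
  have hρc_pos : 0 < ρc := hρc ▸ div_pos (by exact_mod_cast (by omega : 0 < n)) hLpos
  have h0_mem : (0 : ℝ) ∈ h '' Ici 0 := ⟨0, self_mem_Ici, h0⟩
  have hhρc_mem : h ρc ∈ h '' Ici 0 := mem_image_of_mem h hρc_pos.le
  have hnonneg : h '' Ici 0 ⊆ Ici 0 := by simpa only [h0] using hmono.monotoneOn.image_Ici_subset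
  set φ := orderParamRatio n σ (1 / ρc)
  have hφc : ContinuousOn φ (h '' Ici 0) := by
    simpa only [φ, hρc, one_div_div] using hσ.continuousOn_orderParamRatio hmono h0 hconn hn hL
  have hφpos : ∀ κ ∈ h '' Ici 0, 0 < φ κ :=
    fun κ => hσ.orderParamRatio_pos hmono h0 (one_div_pos.2 hρc_pos)
  have hout : ∀ κ ∈ h '' Ici 0 \ Icc 0 (h ρc), φ κ ≤ φ 0 := fun κ ⟨hκ, hκK⟩ =>
    (hσ.orderParamRatio_le_of_apply_lt hmono h0 hρc_pos hκ
      (lt_of_not_ge fun hle => hκK ⟨hnonneg hκ, hle⟩)).trans_eq (if_pos rfl).symm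
  obtain ⟨κ₀, hκ₀, hmax⟩ := hφc.exists_isMaxOn_of_le_off isCompact_Icc
    (hconn.out h0_mem hhρc_mem) ⟨le_rfl, hnonneg hhρc_mem⟩ hout
  have hinv : (fun κ => if κ = 0 then ρc else σ κ / orderParam n κ) = fun κ => 1 / φ κ := by
    ext κ; split_ifs with hκ <;> simp [φ, orderParamRatio, hκ]
  refine ⟨hφc, κ₀, hκ₀, hmax, one_div_pos.2 (hφpos κ₀ hκ₀), ?_,
    hinv ▸ hmax.isLeast_image_one_div hκ₀ hφpos⟩
  calc 1 / φ κ₀ ≤ 1 / φ 0 := one_div_le_one_div_of_le (hφpos 0 h0_mem) (hmax h0_mem)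
    _ = ρc := by simp [φ, orderParamRatio]

/-- The function `φ(κ) = c(κ)/σ(κ)` (extended by `1/ρ_c` at `κ = 0`) is continuous on
`[0, κmax)` and attains its maximum at some `κ₀`; the value `ρ_* = 1/φ(κ₀)` satisfies
`0 < ρ_* ≤ ρ_c` and is the minimum of `σ(κ)/c(κ)` over `[0, κmax)` (with value `ρ_c`
at `κ = 0`). -/
theorem phi_continuousOn_and_attains_max (n : ℕ) (hn : 2 ≤ n)
    (h σ : ℝ → ℝ) (κmax : EReal) (hκmax : 0 < κmax)
    (hcont : ContinuousOn h (Set.Ici 0)) (hmono : StrictMonoOn h (Set.Ici 0))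
    (h0 : h 0 = 0)
    (hrange : ∀ r : ℝ, 0 ≤ r → 0 ≤ h r ∧ (h r : EReal) < κmax)
    (hsurj : ∀ κ : ℝ, 0 ≤ κ → (κ : EReal) < κmax → ∃ r, 0 ≤ r ∧ h r = κ)
    (hσ : ∀ r : ℝ, 0 ≤ r → σ (h r) = r)
    (L : ℝ) (hLpos : 0 < L)
    (hL : Tendsto (fun r : ℝ => h r / r) (nhdsWithin 0 (Set.Ioi 0)) (nhds L))
    (ρc : ℝ) (hρc : ρc = n / L) :
    ContinuousOn (fun κ : ℝ => if κ = 0 then 1 / ρc else orderParam n κ / σ κ)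
      {κ : ℝ | 0 ≤ κ ∧ (κ : EReal) < κmax} ∧
    ∃ κ₀ ∈ {κ : ℝ | 0 ≤ κ ∧ (κ : EReal) < κmax},
      (∀ κ ∈ {κ : ℝ | 0 ≤ κ ∧ (κ : EReal) < κmax},
        (if κ = 0 then 1 / ρc else orderParam n κ / σ κ) ≤
          (if κ₀ = 0 then 1 / ρc else orderParam n κ₀ / σ κ₀)) ∧
      0 < 1 / (if κ₀ = 0 then 1 / ρc else orderParam n κ₀ / σ κ₀) ∧
      1 / (if κ₀ = 0 then 1 / ρc else orderParam n κ₀ / σ κ₀) ≤ ρc ∧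
      IsLeast ((fun κ : ℝ => if κ = 0 then ρc else σ κ / orderParam n κ) ''
          {κ : ℝ | 0 ≤ κ ∧ (κ : EReal) < κmax})
        (1 / (if κ₀ = 0 then 1 / ρc else orderParam n κ₀ / σ κ₀)) :=
  phi_continuousOn_and_attains_max_general n hn h σ κmax hmono h0 hrange hsurj hσ L hLpos hL ρc hρc
end

section
/- If 0 < ρ < ρ_*, then the only κ ∈ [0, κ_max) satisfying the compatibility equation σ(κ) = ρ c(κ) is κ = 0. -/
open MeasureTheory Real Filter

/-- Unlike `csInf_le_of_le`, no lower bound on `s` is needed: an unbounded set has `sInf s = 0`. -/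
lemma Real.sInf_le_of_mem_of_le {s : Set ℝ} {x a : ℝ} (hx : x ∈ s) (hxa : x ≤ a) (ha : 0 ≤ a) :
    sInf s ≤ a := by
  by_cases hs : BddBelow s
  · exact csInf_le_of_le hs hx hxa
  · exact (Real.sInf_of_not_bddBelow hs).le.trans ha

lemma div_le_of_eq_mul {a b ρ : ℝ} (hρ : 0 ≤ ρ) (hab : a = ρ * b) : a / b ≤ ρ := by
  rcases eq_or_ne b 0 with rfl | hb
  · simpa using hρ
  · rw [hab, mul_div_cancel_right₀ ρ hb]

theorem compatibility_only_zero_below_rho_star_general (n : ℕ)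
    (σ : ℝ → ℝ) (κmax : EReal)
    (ρc : ℝ)
    (ρ : ℝ) (hρ0 : 0 < ρ)
    (hρ : ρ < min ρc (sInf ((fun κ : ℝ => σ κ / orderParam n κ) ''
      {κ : ℝ | 0 < κ ∧ (κ : EReal) < κmax}))) :
    ∀ κ : ℝ, 0 ≤ κ → (κ : EReal) < κmax → σ κ = ρ * orderParam n κ → κ = 0 := by
  intro κ hκ0 hκlt heq
  by_contra hκ
  have hratio : σ κ / orderParam n κ ≤ ρ := div_le_of_eq_mul hρ0.le heq
  have hinf : sInf ((fun κ : ℝ => σ κ / orderParam n κ) '' {κ : ℝ | 0 < κ ∧ (κ : EReal) < κmax})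
      ≤ ρ :=
    Real.sInf_le_of_mem_of_le ⟨κ, ⟨hκ0.lt_of_ne' hκ, hκlt⟩, rfl⟩ hratio hρ0.le
  exact (hρ.trans_le (min_le_right _ _)).not_ge hinf

/-- If `0 < ρ < ρ_* := min(ρ_c, inf_{κ ∈ (0,κmax)} σ(κ)/c(κ))`, then the only solution
`κ ∈ [0, κmax)` of the compatibility equation `σ(κ) = ρ c(κ)` is `κ = 0`. -/
theorem compatibility_only_zero_below_rho_star (n : ℕ) (hn : 2 ≤ n)
    (h σ : ℝ → ℝ) (κmax : EReal) (hκmax : 0 < κmax)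
    (hcont : ContinuousOn h (Set.Ici 0)) (hmono : StrictMonoOn h (Set.Ici 0))
    (h0 : h 0 = 0)
    (hrange : ∀ r : ℝ, 0 ≤ r → 0 ≤ h r ∧ (h r : EReal) < κmax)
    (hsurj : ∀ κ : ℝ, 0 ≤ κ → (κ : EReal) < κmax → ∃ r, 0 ≤ r ∧ h r = κ)
    (hσ : ∀ r : ℝ, 0 ≤ r → σ (h r) = r)
    (L : ℝ) (hLpos : 0 < L)
    (hL : Tendsto (fun r : ℝ => h r / r) (nhdsWithin 0 (Set.Ioi 0)) (nhds L))
    (ρc : ℝ) (hρc : ρc = n / L)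
    (ρ : ℝ) (hρ0 : 0 < ρ)
    (hρ : ρ < min ρc (sInf ((fun κ : ℝ => σ κ / orderParam n κ) ''
      {κ : ℝ | 0 < κ ∧ (κ : EReal) < κmax}))) :
    ∀ κ : ℝ, 0 ≤ κ → (κ : EReal) < κmax → σ κ = ρ * orderParam n κ → κ = 0 :=
  compatibility_only_zero_below_rho_star_general n σ κmax ρc ρ hρ0 hρ
end

section
/- Assume in addition that κ ↦ σ(κ)/c(κ) is strictly increasing on (0, κ_max), and that there exist a > 0 and β ∈ (0,1] such that (c(κ)/σ(κ) − 1/ρ_c)/κ^{1/β} → −a as κ → 0⁺. For ρ > ρ_c let κ(ρ) denote the unique solution in (0, κ_max) of σ(κ) = ρ c(κ). Then the asymptotic order parameter exhibits the critical exponent β: c(κ(ρ)) / (ρ − ρ_c)^β → (1/n) (a ρ_c²)^{−β} as ρ → ρ_c⁺. -/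
/-! Write `f = σ / c`. Since `h r ∼ L r`, the inverse satisfies `σ κ ∼ κ / L`, and the expansion
`c / σ = ρ_c⁻¹ - a κ^{1/β} + o(κ^{1/β})` inverts to `f κ - ρ_c ∼ a ρ_c² κ^{1/β}`; as `c κ ∼ κ / n`,
this gives `c κ / (f κ - ρ_c)^β → (1/n) (a ρ_c²)^{-β}` as `κ → 0⁺`. Because `f` is strictly
increasing with `f (0⁺) = ρ_c` and `f (κ(ρ)) = ρ`, the solution `κ(ρ)` tends to `0⁺` as `ρ → ρ_c⁺`,
and substituting `κ = κ(ρ)` turns `f κ - ρ_c` into `ρ - ρ_c`. -/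

open MeasureTheory Real Filter

open Topology Set

section Asymptotics

variable {α : Type*} {l : Filter α}

theorem tendsto_of_tendsto_sub_div {w g : α → ℝ} {w₀ d : ℝ}
    (hd : Tendsto (fun x => (w x - w₀) / g x) l (𝓝 d)) (hg : Tendsto g l (𝓝 0))
    (hg0 : ∀ᶠ x in l, g x ≠ 0) : Tendsto w l (𝓝 w₀) := by
  have hlim := (hd.mul hg).add_const w₀
  rw [mul_zero, zero_add] at hlim
  refine hlim.congr' ?_
  filter_upwards [hg0] with x hx
  rw [div_mul_cancel₀ _ hx, sub_add_cancel]

theorem tendsto_inv_sub_inv_div {w g : α → ℝ} {w₀ d : ℝ} (hw₀ : w₀ ≠ 0)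
    (hw : Tendsto w l (𝓝 w₀)) (hd : Tendsto (fun x => (w x - w₀) / g x) l (𝓝 d)) :
    Tendsto (fun x => ((w x)⁻¹ - w₀⁻¹) / g x) l (𝓝 (-d / w₀ ^ 2)) := by
  have hlim := hd.neg.div (hw.mul_const w₀) (mul_ne_zero hw₀ hw₀)
  rw [← sq] at hlim
  refine hlim.congr' ?_
  filter_upwards [hw.eventually_ne hw₀] with x hx
  simp only [Pi.div_apply]
  rw [inv_sub_inv hx hw₀]
  ring

theorem tendsto_rpow_div_of_tendsto_div_rpow {u : ℝ → ℝ} {b β : ℝ} (hb : 0 < b) (hβ : 0 < β)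
    (hu : Tendsto (fun κ => u κ / κ ^ β⁻¹) (𝓝[>] 0) (𝓝 b)) :
    Tendsto (fun κ => u κ ^ β / κ) (𝓝[>] 0) (𝓝 (b ^ β)) := by
  refine ((Real.continuousAt_rpow_const b β (Or.inl hb.ne')).tendsto.comp hu).congr' ?_
  filter_upwards [self_mem_nhdsWithin, hu.eventually (eventually_gt_nhds hb)] with κ hκ hpos
  have hκβ : 0 < κ ^ β⁻¹ := Real.rpow_pos_of_pos hκ _
  have hu0 : 0 ≤ u κ := (div_pos_iff_of_pos_right hκβ).1 hpos |>.le
  simp only [Function.comp_apply]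
  rw [Real.div_rpow hu0 hκβ.le, Real.rpow_inv_rpow (le_of_lt hκ) hβ.ne']

theorem tendsto_of_tendsto_sub_div_rpow {w : ℝ → ℝ} {w₀ d q : ℝ} (hq : 0 < q)
    (hd : Tendsto (fun κ => (w κ - w₀) / κ ^ q) (𝓝[>] 0) (𝓝 d)) : Tendsto w (𝓝[>] 0) (𝓝 w₀) := by
  have hrpow : Tendsto (fun κ : ℝ => κ ^ q) (𝓝[>] 0) (𝓝 0) := by
    simpa only [Real.zero_rpow hq.ne'] using
      (Real.continuousAt_rpow_const 0 q (Or.inr hq.le)).tendsto.mono_left nhdsWithin_le_nhds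
  refine tendsto_of_tendsto_sub_div hd hrpow ?_
  filter_upwards [self_mem_nhdsWithin] with κ hκ
  exact (Real.rpow_pos_of_pos hκ q).ne'

end Asymptotics

section InverseFunction

variable {h g : ℝ → ℝ}

theorem tendsto_nhdsGT_zero_of_rightInverse (hmono : StrictMonoOn h (Ici 0)) (h0 : h 0 = 0)
    (hg : ∀ᶠ κ in 𝓝[>] 0, 0 ≤ g κ ∧ h (g κ) = κ) : Tendsto g (𝓝[>] 0) (𝓝[>] 0) := by
  have hpos : ∀ᶠ κ in 𝓝[>] 0, 0 < g κ := by
    filter_upwards [hg, self_mem_nhdsWithin] with κ ⟨hg0, hgκ⟩ hκ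
    refine hg0.lt_of_ne fun hzero => (ne_of_gt (mem_Ioi.1 hκ)) ?_
    rw [← hgκ, ← hzero, h0]
  refine tendsto_nhdsWithin_iff.2 ⟨tendsto_order.2 ⟨fun ε hε => ?_, fun ε hε => ?_⟩, hpos⟩
  · exact hpos.mono fun κ hκ => hε.trans hκ
  · have hhε : 0 < h ε := h0 ▸ hmono self_mem_Ici (mem_Ici.2 hε.le) hε
    filter_upwards [hg, nhdsWithin_le_nhds (eventually_lt_nhds hhε)] with κ ⟨hg0, hgκ⟩ hκ
    rw [← hgκ] at hκ
    exact (hmono.lt_iff_lt hg0 (mem_Ici.2 hε.le)).1 hκ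

theorem tendsto_div_self_of_rightInverse (hmono : StrictMonoOn h (Ici 0)) (h0 : h 0 = 0)
    (hg : ∀ᶠ κ in 𝓝[>] 0, 0 ≤ g κ ∧ h (g κ) = κ) {L : ℝ} (hL0 : L ≠ 0)
    (hL : Tendsto (fun r => h r / r) (𝓝[>] 0) (𝓝 L)) :
    Tendsto (fun κ => g κ / κ) (𝓝[>] 0) (𝓝 L⁻¹) := by
  refine ((hL.comp (tendsto_nhdsGT_zero_of_rightInverse hmono h0 hg)).inv₀ hL0).congr' ?_
  filter_upwards [hg] with κ ⟨_, hgκ⟩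
  rw [Function.comp_apply, hgκ, inv_div]

end InverseFunction

theorem lt_of_strictMonoOn_of_tendsto_nhdsGT {f : ℝ → ℝ} {S : Set ℝ} {ρ₀ κ : ℝ}
    (hf : StrictMonoOn f S) (hS : S ∈ 𝓝[>] 0) (hlim : Tendsto f (𝓝[>] 0) (𝓝 ρ₀))
    (hκS : κ ∈ S) (hκ : 0 < κ) : ρ₀ < f κ := by
  obtain ⟨κ', hκ'S, hκ'⟩ := Filter.nonempty_of_mem (inter_mem hS (Ioo_mem_nhdsGT hκ))
  refine lt_of_le_of_lt (le_of_tendsto hlim ?_) (hf hκ'S hκS hκ'.2)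
  filter_upwards [hS, Ioo_mem_nhdsGT hκ'.1] with x hxS hx
  exact (hf hxS hκ'S hx.2).le

theorem tendsto_nhdsGT_zero_of_strictMonoOn_of_apply_eq {f k : ℝ → ℝ} {S : Set ℝ} {ρ₀ : ℝ}
    (hf : StrictMonoOn f S) (hS : S ∈ 𝓝[>] 0) (hlim : Tendsto f (𝓝[>] 0) (𝓝 ρ₀))
    (hk : ∀ ρ, ρ₀ < ρ → 0 < k ρ ∧ k ρ ∈ S ∧ f (k ρ) = ρ) :
    Tendsto k (𝓝[>] ρ₀) (𝓝[>] 0) := by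
  have hpos : ∀ᶠ ρ in 𝓝[>] ρ₀, 0 < k ρ := eventually_mem_nhdsWithin.mono fun ρ hρ => (hk ρ hρ).1
  refine tendsto_nhdsWithin_iff.2 ⟨tendsto_order.2 ⟨fun ε hε => ?_, fun ε hε => ?_⟩, hpos⟩
  · exact hpos.mono fun ρ hρ => hε.trans hρ
  · obtain ⟨δ, hδS, hδ⟩ := Filter.nonempty_of_mem (inter_mem hS (Ioo_mem_nhdsGT hε))
    filter_upwards [Ioo_mem_nhdsGT (lt_of_strictMonoOn_of_tendsto_nhdsGT hf hS hlim hδS hδ.1)]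
      with ρ hρ
    obtain ⟨-, hkS, hfk⟩ := hk ρ hρ.1
    refine lt_trans ?_ hδ.2
    rw [← hf.lt_iff_lt hkS hδS, hfk]
    exact hρ.2

theorem tendsto_div_rpow_sub_of_tendsto {c σ : ℝ → ℝ} {s ρ₀ a β : ℝ} (hρ₀ : ρ₀ ≠ 0)
    (ha : 0 < a) (hβ : 0 < β) (hσ : Tendsto (fun κ => σ κ / κ) (𝓝[>] 0) (𝓝 s))
    (hasymp : Tendsto (fun κ => (c κ / σ κ - ρ₀⁻¹) / κ ^ β⁻¹) (𝓝[>] 0) (𝓝 (-a))) :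
    Tendsto (fun κ => c κ / (σ κ / c κ - ρ₀) ^ β) (𝓝[>] 0)
      (𝓝 (ρ₀⁻¹ * s * (a * ρ₀ ^ 2) ^ (-β))) := by
  have hw := tendsto_of_tendsto_sub_div_rpow (inv_pos.2 hβ) hasymp
  have hinv : Tendsto (fun κ => (σ κ / c κ - ρ₀) / κ ^ β⁻¹) (𝓝[>] 0) (𝓝 (a * ρ₀ ^ 2)) := by
    simpa only [inv_div, inv_inv, neg_neg, inv_pow, div_inv_eq_mul] using
      tendsto_inv_sub_inv_div (inv_ne_zero hρ₀) hw hasymp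
  have hpow := tendsto_rpow_div_of_tendsto_div_rpow (by positivity) hβ hinv
  have hc : Tendsto (fun κ => c κ / κ) (𝓝[>] 0) (𝓝 (ρ₀⁻¹ * s)) := by
    refine (hw.mul hσ).congr' ?_
    filter_upwards [hw.eventually_ne (inv_ne_zero hρ₀)] with κ hκ
    rw [div_mul_div_cancel₀ (div_ne_zero_iff.1 hκ).2]
  rw [Real.rpow_neg (by positivity), ← div_eq_mul_inv]
  refine (hc.div hpow (by positivity)).congr' ?_
  filter_upwards [self_mem_nhdsWithin] with κ hκ
  exact div_div_div_cancel_right₀ (ne_of_gt hκ) _ _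

theorem critical_exponent_general (n : ℕ) (hn : 2 ≤ n)
    (h σ : ℝ → ℝ) (κmax : EReal) (hκmax : 0 < κmax)
    (hmono : StrictMonoOn h (Set.Ici 0))
    (h0 : h 0 = 0)
    (hsurj : ∀ κ : ℝ, 0 ≤ κ → (κ : EReal) < κmax → ∃ r, 0 ≤ r ∧ h r = κ)
    (hσ : ∀ r : ℝ, 0 ≤ r → σ (h r) = r)
    (L : ℝ) (hLpos : 0 < L)
    (hL : Tendsto (fun r : ℝ => h r / r) (nhdsWithin 0 (Set.Ioi 0)) (nhds L))
    (ρc : ℝ) (hρc : ρc = n / L)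
    (hinc : StrictMonoOn (fun κ : ℝ => σ κ / orderParam n κ)
      {κ : ℝ | 0 < κ ∧ (κ : EReal) < κmax})
    (a β : ℝ) (ha : 0 < a) (hβ : β ∈ Set.Ioc (0:ℝ) 1)
    (hasymp : Tendsto
      (fun κ : ℝ => (orderParam n κ / σ κ - 1 / ρc) / κ ^ (1 / β))
      (nhdsWithin 0 (Set.Ioi 0)) (nhds (-a)))
    (k : ℝ → ℝ)
    (hk : ∀ ρ : ℝ, ρc < ρ →
      0 < k ρ ∧ ((k ρ : ℝ) : EReal) < κmax ∧ σ (k ρ) = ρ * orderParam n (k ρ)) :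
    Tendsto (fun ρ : ℝ => orderParam n (k ρ) / (ρ - ρc) ^ β)
      (nhdsWithin ρc (Set.Ioi ρc)) (nhds ((1 / n) * (a * ρc ^ 2) ^ (-β))) := by
  set S := {κ : ℝ | 0 < κ ∧ (κ : EReal) < κmax}
  have hn0 : (0 : ℝ) < n := Nat.cast_pos.2 (by omega)
  have hρc0 : 0 < ρc := hρc ▸ div_pos hn0 hLpos
  have hS : S ∈ 𝓝[>] 0 := by
    obtain ⟨m, hm0, hmκ⟩ := EReal.exists_between_coe_real hκmax
    refine mem_of_superset (Ioo_mem_nhdsGT (EReal.coe_pos.1 hm0)) fun κ hκ => ?_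
    exact ⟨hκ.1, (EReal.coe_lt_coe_iff.2 hκ.2).trans hmκ⟩
  have hσS : ∀ κ ∈ S, 0 < σ κ ∧ h (σ κ) = κ := by
    rintro κ ⟨hκ, hκmax⟩
    obtain ⟨r, hr, rfl⟩ := hsurj κ hκ.le hκmax
    rw [hσ r hr]
    exact ⟨hr.lt_of_ne (by rintro rfl; exact hκ.ne' h0), rfl⟩
  have hasymp' : Tendsto (fun κ => (orderParam n κ / σ κ - ρc⁻¹) / κ ^ β⁻¹) (𝓝[>] 0) (𝓝 (-a)) :=
    by simpa only [one_div] using hasymp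
  have hσlim : Tendsto (fun κ => σ κ / κ) (𝓝[>] 0) (𝓝 L⁻¹) :=
    tendsto_div_self_of_rightInverse hmono h0
      (eventually_of_mem hS fun κ hκ => ⟨(hσS κ hκ).1.le, (hσS κ hκ).2⟩) hLpos.ne' hL
  have hflim : Tendsto (fun κ => σ κ / orderParam n κ) (𝓝[>] 0) (𝓝 ρc) := by
    simpa only [inv_div, inv_inv] using
      (tendsto_of_tendsto_sub_div_rpow (inv_pos.2 hβ.1) hasymp').inv₀ (inv_ne_zero hρc0.ne')
  have hfk : ∀ ρ, ρc < ρ → 0 < k ρ ∧ k ρ ∈ S ∧ σ (k ρ) / orderParam n (k ρ) = ρ := by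
    intro ρ hρ
    obtain ⟨hk0, hkκ, hkeq⟩ := hk ρ hρ
    have hc : orderParam n (k ρ) ≠ 0 := fun hc => (hσS _ ⟨hk0, hkκ⟩).1.ne' (by rw [hkeq, hc, mul_zero])
    exact ⟨hk0, ⟨hk0, hkκ⟩, by rw [hkeq, mul_div_cancel_right₀ _ hc]⟩
  have hlim := (tendsto_div_rpow_sub_of_tendsto hρc0.ne' ha hβ.1 hσlim hasymp').comp
    (tendsto_nhdsGT_zero_of_strictMonoOn_of_apply_eq hinc hS hflim hfk)
  rw [show ρc⁻¹ * L⁻¹ = 1 / n by rw [hρc]; field_simp] at hlim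
  refine hlim.congr' ?_
  filter_upwards [self_mem_nhdsWithin] with ρ hρ
  rw [Function.comp_apply, (hfk ρ hρ).2.2]

/-- Critical exponent for the second order phase transition: if
`c(κ)/σ(κ) - 1/ρ_c ∼ -a κ^{1/β}` as `κ → 0⁺`, then the order parameter of the unique
non-isotropic equilibrium satisfies `c(κ(ρ)) ∼ (1/n)(aρ_c²)^{-β} (ρ-ρ_c)^β` as
`ρ → ρ_c⁺`. -/
theorem critical_exponent (n : ℕ) (hn : 2 ≤ n)
    (h σ : ℝ → ℝ) (κmax : EReal) (hκmax : 0 < κmax)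
    (hcont : ContinuousOn h (Set.Ici 0)) (hmono : StrictMonoOn h (Set.Ici 0))
    (h0 : h 0 = 0)
    (hrange : ∀ r : ℝ, 0 ≤ r → 0 ≤ h r ∧ (h r : EReal) < κmax)
    (hsurj : ∀ κ : ℝ, 0 ≤ κ → (κ : EReal) < κmax → ∃ r, 0 ≤ r ∧ h r = κ)
    (hσ : ∀ r : ℝ, 0 ≤ r → σ (h r) = r)
    (L : ℝ) (hLpos : 0 < L)
    (hL : Tendsto (fun r : ℝ => h r / r) (nhdsWithin 0 (Set.Ioi 0)) (nhds L))
    (ρc : ℝ) (hρc : ρc = n / L)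
    (hinc : StrictMonoOn (fun κ : ℝ => σ κ / orderParam n κ)
      {κ : ℝ | 0 < κ ∧ (κ : EReal) < κmax})
    (a β : ℝ) (ha : 0 < a) (hβ : β ∈ Set.Ioc (0:ℝ) 1)
    (hasymp : Tendsto
      (fun κ : ℝ => (orderParam n κ / σ κ - 1 / ρc) / κ ^ (1 / β))
      (nhdsWithin 0 (Set.Ioi 0)) (nhds (-a)))
    (k : ℝ → ℝ)
    (hk : ∀ ρ : ℝ, ρc < ρ →
      0 < k ρ ∧ ((k ρ : ℝ) : EReal) < κmax ∧ σ (k ρ) = ρ * orderParam n (k ρ)) :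
    Tendsto (fun ρ : ℝ => orderParam n (k ρ) / (ρ - ρc) ^ β)
      (nhdsWithin ρc (Set.Ioi ρc)) (nhds ((1 / n) * (a * ρc ^ 2) ^ (-β))) :=
  critical_exponent_general n hn h σ κmax hκmax hmono h0 hsurj hσ L hLpos hL ρc hρc hinc a β ha hβ
    hasymp k hk
end
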